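/- arXiv:2012.09397 — 2 statements merged into one kernel-verified Lean document; each statement's English description precedes it below -/
import Mathlib

section
/- If the Hartree-Fock orbital energies of every normalized solution with energy E < J(N−1) lie in the compact box [inf σ(h), J(N−1) − E]^N, and limits of solutions with converging orbital energies are again solutions (in H² norm), then the set Ã(E) of all critical points of f with energy E is compact in (⊕ᵢH²(ℝ³)) ⊕ ℝ^N. -/
open Filter Topology

/-- suppose the orbital energies of every normalized Hartree-Fock solution
with energy `E < J(N−1)` lie in the compact box `[inf σ(h), E − J(N−1)]^N` (lower bound
`a = inf σ(h)`; upper bound `E − J(N−1) < 0` from Koopmans' theorem), and limits of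
solutions with converging orbital energies `e^m → e^∞ ∈ (−∞,0)^N` are again solutions
with the same critical value (convergence in `H²`-norm, modelled by a metric space `Y`).
Then the set `Ã(E)` of all critical points of `f` with energy `E` is compact in
`(⊕ᵢH²) ⊕ ℝ^N`. -/
theorem stmt_13 {Y : Type*} [MetricSpace Y] {N : ℕ}
    (sol : Y → (Fin N → ℝ) → Prop) (En : Y → ℝ)
    (E J a : ℝ) (hEJ : E < J)
    (hbox : ∀ Φ e, sol Φ e → En Φ = E → ∀ i, e i ∈ Set.Icc a (E - J))
    (hconv : ∀ (Φm : ℕ → Y) (em : ℕ → Fin N → ℝ) (eLim : Fin N → ℝ),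
      (∀ m, sol (Φm m) (em m)) → (∀ m, En (Φm m) = E) → (∀ i, eLim i < 0) →
      Tendsto em atTop (𝓝 eLim) →
      ∃ ψ : ℕ → ℕ, StrictMono ψ ∧ ∃ ΦLim : Y, sol ΦLim eLim ∧ En ΦLim = E ∧
        Tendsto (Φm ∘ ψ) atTop (𝓝 ΦLim)) :
    IsSeqCompact {z : Y × (Fin N → ℝ) | sol z.1 z.2 ∧ En z.1 = E} := by
  intro x hx
  -- orbital energies lie in a compact box
  have hmem : ∀ n, (x n).2 ∈ Set.Icc (fun _ : Fin N => a) (fun _ : Fin N => E - J) := by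
    intro n
    have h := hbox (x n).1 (x n).2 (hx n).1 (hx n).2
    exact ⟨fun i => (h i).1, fun i => (h i).2⟩
  obtain ⟨eLim, heLim, ψ1, hψ1, hψ1t⟩ :=
    (isCompact_Icc (α := Fin N → ℝ)).isSeqCompact hmem
  have heneg : ∀ i, eLim i < 0 := fun i =>
    lt_of_le_of_lt (heLim.2 i) (show (fun _ : Fin N => E - J) i < 0 by simp; linarith)
  obtain ⟨ψ2, hψ2, ΦLim, hsol, hEn, hΦt⟩ :=
    hconv (fun n => (x (ψ1 n)).1) (fun n => (x (ψ1 n)).2) eLim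
      (fun n => (hx (ψ1 n)).1) (fun n => (hx (ψ1 n)).2) heneg hψ1t
  refine ⟨(ΦLim, eLim), ⟨hsol, hEn⟩, ψ1 ∘ ψ2, hψ1.comp hψ2, ?_⟩
  have h2 : Tendsto (fun n => (x (ψ1 (ψ2 n))).2) atTop (𝓝 eLim) :=
    hψ1t.comp hψ2.tendsto_atTop
  exact (hΦt.prodMk_nhds h2)
end

section
/- Let F : G ⊂ X × Y → Z be real-analytic between real Banach spaces with F(x₀,y₀) = 0 and the partial derivative F'_y(x₀,y₀) invertible. Then there exist neighborhoods U(x₀), U(y₀) with U(x₀) × U(y₀) ⊂ G and a unique map y : U(x₀) → U(y₀) with F(x, y(x)) = 0 on U(x₀); moreover y is real-analytic. -/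
open Filter Topology

open scoped ContDiff

/-! Near a zero of `F` whose `y`-derivative is invertible, Mathlib's implicit function theorem
for `C^n` maps (`ContDiffAt.implicitFunction`) applies with `n = ω`, where `C^ω` is
analyticity; it describes the zero set of `F` near `(x₀, y₀)` as the graph of an implicit
function analytic at `x₀`, hence on a neighbourhood of `x₀`. Shrinking to a product
neighbourhood inside `G` on which that description holds gives existence and uniqueness. -/

theorem ContinuousLinearMap.isInvertible_of_bijective {𝕜 E F : Type*} [NontriviallyNormedField 𝕜]
    [NormedAddCommGroup E] [NormedSpace 𝕜 E] [CompleteSpace E]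
    [NormedAddCommGroup F] [NormedSpace 𝕜 F] [CompleteSpace F]
    {f : E →L[𝕜] F} (hf : Function.Bijective f) : f.IsInvertible :=
  ⟨.ofBijective f (LinearMap.ker_eq_bot.mpr hf.1) (LinearMap.range_eq_top.mpr hf.2),
    ContinuousLinearEquiv.coe_ofBijective _ _ _⟩

theorem DifferentiableAt.fderiv_comp_prodMk {𝕜 E F G : Type*} [NontriviallyNormedField 𝕜]
    [NormedAddCommGroup E] [NormedSpace 𝕜 E] [NormedAddCommGroup F] [NormedSpace 𝕜 F]
    [NormedAddCommGroup G] [NormedSpace 𝕜 G] {f : E × F → G} {x : E} {y : F}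
    (hf : DifferentiableAt 𝕜 f (x, y)) :
    fderiv 𝕜 (fun y => f (x, y)) y = fderiv 𝕜 f (x, y) ∘L .inr 𝕜 E F :=
  (hf.hasFDerivAt.comp y ((hasFDerivAt_const x y).prodMk (hasFDerivAt_id y))).fderiv

theorem AnalyticAt.exists_implicitFunction {𝕜 E₁ E₂ F : Type*} [RCLike 𝕜]
    [NormedAddCommGroup E₁] [NormedSpace 𝕜 E₁] [CompleteSpace E₁]
    [NormedAddCommGroup E₂] [NormedSpace 𝕜 E₂] [CompleteSpace E₂]
    [NormedAddCommGroup F] [NormedSpace 𝕜 F] [CompleteSpace F]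
    {f : E₁ × E₂ → F} {u : E₁ × E₂} (hf : AnalyticAt 𝕜 f u)
    (if₂ : (fderiv 𝕜 f u ∘L .inr 𝕜 E₁ E₂).IsInvertible) :
    ∃ ψ : E₁ → E₂, AnalyticAt 𝕜 ψ u.1 ∧ ψ u.1 = u.2 ∧
      ∀ᶠ v in 𝓝 u, f v = f u ↔ ψ v.1 = v.2 := by
  have cdf : ContDiffAt 𝕜 ω f u := hf.contDiffAt
  have pn : (ω : WithTop ℕ∞) ≠ 0 := by simp
  exact ⟨cdf.implicitFunction pn if₂, (cdf.contDiffAt_implicitFunction pn if₂).analyticAt,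
    cdf.implicitFunction_apply_self pn if₂, cdf.eventually_apply_eq_iff_implicitFunction pn if₂⟩

theorem exists_nhds_prod_of_eventually_iff_graph {X Y : Type*} [TopologicalSpace X]
    [TopologicalSpace Y] {ψ : X → Y} {x₀ : X} {p : X × Y → Prop} {s : Set X} {t : Set (X × Y)}
    (hψ : ContinuousAt ψ x₀) (hs : s ∈ 𝓝 x₀) (ht : t ∈ 𝓝 (x₀, ψ x₀))
    (hp : ∀ᶠ v in 𝓝 (x₀, ψ x₀), p v ↔ ψ v.1 = v.2) :
    ∃ U ∈ 𝓝 x₀, ∃ V ∈ 𝓝 (ψ x₀), U ⊆ s ∧ U ×ˢ V ⊆ t ∧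
      (∀ x ∈ U, ψ x ∈ V ∧ p (x, ψ x)) ∧ ∀ x ∈ U, ∀ y ∈ V, p (x, y) → y = ψ x := by
  obtain ⟨U₁, hU₁, V, hV, hUV⟩ := mem_nhds_prod_iff.mp (inter_mem ht hp)
  refine ⟨s ∩ U₁ ∩ ψ ⁻¹' V, inter_mem (inter_mem hs hU₁) (hψ.preimage_mem_nhds hV), V, hV,
    fun x hx => hx.1.1, fun v hv => (hUV ⟨hv.1.1.2, hv.2⟩).1, ?_, ?_⟩
  · rintro x ⟨⟨-, hxU₁⟩, hψV⟩
    exact ⟨hψV, (hUV (Set.mk_mem_prod hxU₁ hψV)).2.mpr rfl⟩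
  · rintro x ⟨⟨-, hxU₁⟩, -⟩ y hy hpxy
    exact ((hUV (Set.mk_mem_prod hxU₁ hy)).2.mp hpxy).symm

/-- real-analytic implicit function theorem in Banach spaces: let
`F : G ⊂ X × Y → Z` be real-analytic with `F(x₀,y₀) = 0` and the partial Fréchet
derivative `F'_y(x₀,y₀)` invertible.  Then there are neighborhoods `U(x₀)`, `U(y₀)` with
`U(x₀) × U(y₀) ⊆ G` and a unique map `y : U(x₀) → U(y₀)` with `F(x, y(x)) = 0` on
`U(x₀)`; moreover `y` is real-analytic. -/
theorem stmt_14 {X Y Z : Type*}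
    [NormedAddCommGroup X] [NormedSpace ℝ X] [CompleteSpace X]
    [NormedAddCommGroup Y] [NormedSpace ℝ Y] [CompleteSpace Y]
    [NormedAddCommGroup Z] [NormedSpace ℝ Z] [CompleteSpace Z]
    (G : Set (X × Y)) (hG : IsOpen G) (F : X × Y → Z)
    (hF : AnalyticOnNhd ℝ F G)
    (x₀ : X) (y₀ : Y) (hmem : (x₀, y₀) ∈ G) (hzero : F (x₀, y₀) = 0)
    (hinv : Function.Bijective (fderiv ℝ (fun y => F (x₀, y)) y₀)) :
    ∃ U ∈ 𝓝 x₀, ∃ V ∈ 𝓝 y₀, U ×ˢ V ⊆ G ∧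
      ∃ g : X → Y, AnalyticOnNhd ℝ g U ∧
        (∀ x ∈ U, g x ∈ V ∧ F (x, g x) = 0) ∧
        ∀ x ∈ U, ∀ y ∈ V, F (x, y) = 0 → y = g x := by
  have hFa : AnalyticAt ℝ F (x₀, y₀) := hF _ hmem
  rw [hFa.differentiableAt.fderiv_comp_prodMk] at hinv
  obtain ⟨g, hga, hgx₀, hg⟩ :=
    hFa.exists_implicitFunction (ContinuousLinearMap.isInvertible_of_bijective hinv)
  dsimp only at hgx₀ hg
  rw [hzero] at hg
  subst hgx₀
  obtain ⟨U, hU, V, hV, hUs, hUV, hgraph, huniq⟩ :=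
    exists_nhds_prod_of_eventually_iff_graph hga.continuousAt hga.eventually_analyticAt
      (hG.mem_nhds hmem) hg
  exact ⟨U, hU, V, hV, hUV, g, hUs, hgraph, huniq⟩
end
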